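/- Let μ > 0, α < 0, N a positive integer, ω > α²/N², and let w(x) = φ_{ω,−a⁰}(x) with a⁰ = (1/(μ√ω)) arctanh(|α|/(N√ω)) be the common component of the N-tail state. Let ψ₁,…,ψ_N : [0,∞) → ℝ be continuously differentiable functions with ψ₁(0) = … = ψ_N(0), each ψ_k and ψ_k' square-integrable, and ψ_k(x) → 0 as x → ∞. Then the quadratic form of L₊ satisfies the identity Σ_{k=1}^N ∫₀^∞ ( ψ_k'(x)² + ω ψ_k(x)² − w(x)^{2μ} ψ_k(x)² ) dx + α ψ₁(0)² = Σ_{k=1}^N ∫₀^∞ w(x)² · ( (ψ_k/w)'(x) )² dx. In particular the left-hand side is nonnegative, and it vanishes if and only if every ψ_k is the same constant multiple of w. -/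

import Mathlib

/-
The profile `w = φ_{ω,-a⁰}` satisfies `w' = -T w` with `T = √ω tanh(μ√ω(x + a⁰))`, and `T`
solves the Riccati equation `T' = T² - (ω - w^{2μ})`. Hence on every edge
`ψ'² + (ω - w^{2μ}) ψ² = (ψ' + T ψ)² - (T ψ²)'` and `(ψ' + T ψ)² = w² ((ψ/w)')²`. Integrating
over `(0, ∞)` with `ψ → 0` at infinity leaves the boundary term `T(0) ψ(0)²`; the shift `a⁰` is
chosen so that `T(0) = |α|/N`, and the `N` boundary terms cancel `α ψ(0)²`. The form vanishes iff
every `ψ_k / w` is constant on `[0, ∞)`, and continuity at the vertex makes the constants agree.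
-/

open MeasureTheory Set Filter

/-- The soliton profile `φ_{ω,a}(x) = ((μ+1)ω)^{1/(2μ)} sech^{1/μ}(μ√ω (x − a))`. -/
noncomputable def solitonProfile (μ ω a : ℝ) (x : ℝ) : ℝ :=
  ((μ + 1) * ω) ^ (1 / (2 * μ)) *
    (1 / Real.cosh (μ * Real.sqrt ω * (x - a))) ^ (1 / μ)

/-- The inverse hyperbolic tangent. -/
noncomputable def arctanh (x : ℝ) : ℝ := (1 / 2) * Real.log ((1 + x) / (1 - x))

/-- The quadratic form of the linearization operator `L₊` around the `N`-tail
state with common component `w`, evaluated on the `N`-tuple `ψ` (with vertex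
value taken at the edge `k₀`):
`Σ_k ∫₀^∞ (ψ_k'² + ω ψ_k² − w^{2μ} ψ_k²) dx + α ψ₁(0)²`. -/
noncomputable def LplusForm (μ ω α : ℝ) {N : ℕ} (w : ℝ → ℝ)
    (ψ : Fin N → ℝ → ℝ) (k₀ : Fin N) : ℝ :=
  (∑ k : Fin N, ∫ x in Ioi (0 : ℝ),
      ((deriv (ψ k) x) ^ 2 + ω * (ψ k x) ^ 2 - w x ^ (2 * μ) * (ψ k x) ^ 2))
    + α * (ψ k₀ 0) ^ 2

open Real Topology

theorem Real.hasDerivAt_tanh (x : ℝ) : HasDerivAt tanh (1 - tanh x ^ 2) x := by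
  rw [show tanh = fun y => sinh y / cosh y from funext tanh_eq_sinh_div_cosh]
  refine ((hasDerivAt_sinh x).div (hasDerivAt_cosh x) (cosh_pos x).ne').congr_deriv ?_
  field_simp

theorem Real.continuous_tanh : Continuous tanh :=
  continuous_iff_continuousAt.2 fun x => (hasDerivAt_tanh x).continuousAt

section GroundState

variable {f w T V : ℝ → ℝ} {a M C : ℝ}

theorem HasDerivAt.div_of_hasDerivAt_neg_mul {f' x : ℝ} (hf : HasDerivAt f f' x)
    (hw : HasDerivAt w (-(T x * w x)) x) (hw0 : w x ≠ 0) :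
    HasDerivAt (fun y => f y / w y) ((f' + T x * f x) / w x) x := by
  refine (hf.div hw hw0).congr_deriv ?_
  field_simp
  ring

theorem integrableOn_sq_deriv_add_mul (hf : ContDiff ℝ 1 f) (hT : Continuous T)
    (hTM : ∀ x, |T x| ≤ M) (hf2 : IntegrableOn (fun x => f x ^ 2) (Ioi a))
    (hf'2 : IntegrableOn (fun x => deriv f x ^ 2) (Ioi a)) :
    IntegrableOn (fun x => (deriv f x + T x * f x) ^ 2) (Ioi a) := by
  refine ((hf'2.const_mul 2).add (hf2.const_mul (2 * M ^ 2))).mono' ?_ (ae_of_all _ fun x => ?_)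
  · exact (((hf.continuous_deriv le_rfl).add (hT.mul hf.continuous)).pow 2).aestronglyMeasurable
  · have hT2 : T x ^ 2 ≤ M ^ 2 := by
      rw [← sq_abs]; exact pow_le_pow_left₀ (abs_nonneg _) (hTM x) 2
    rw [Real.norm_of_nonneg (sq_nonneg _)]
    simp only [Pi.add_apply]
    nlinarith [sq_nonneg (deriv f x - T x * f x), mul_le_mul_of_nonneg_right hT2 (sq_nonneg (f x))]

/-- Ground-state substitution: if `T' = T² - V`, then `f'² + V f² = (f' + T f)² - (T f²)'`. -/
theorem integral_Ioi_sq_deriv_add_potential (hf : ContDiff ℝ 1 f)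
    (hT : ∀ x, HasDerivAt T (T x ^ 2 - V x) x) (hTM : ∀ x, |T x| ≤ M)
    (hV : Continuous V) (hVC : ∀ x, |V x| ≤ C)
    (hf2 : IntegrableOn (fun x => f x ^ 2) (Ioi a))
    (hf'2 : IntegrableOn (fun x => deriv f x ^ 2) (Ioi a))
    (hf_tendsto : Tendsto f atTop (𝓝 0)) :
    ∫ x in Ioi a, (deriv f x ^ 2 + V x * f x ^ 2)
      = (∫ x in Ioi a, (deriv f x + T x * f x) ^ 2) + T a * f a ^ 2 := by
  have hTc : Continuous T := continuous_iff_continuousAt.2 fun x => (hT x).continuousAt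
  have hsq := integrableOn_sq_deriv_add_mul hf hTc hTM hf2 hf'2
  have hpot : IntegrableOn (fun x => deriv f x ^ 2 + V x * f x ^ 2) (Ioi a) :=
    hf'2.add (hf2.bdd_mul hV.aestronglyMeasurable (ae_of_all _ fun x => hVC x))
  have hderiv : ∀ x ∈ Ici a, HasDerivAt (fun y => -(T y * f y ^ 2))
      ((deriv f x ^ 2 + V x * f x ^ 2) - (deriv f x + T x * f x) ^ 2) x := by
    intro x _
    refine ((hT x).mul ((hf.differentiable one_ne_zero x).hasDerivAt.pow 2)).neg.congr_deriv ?_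
    simp only [Pi.pow_apply]
    ring
  have hlim : Tendsto (fun y => -(T y * f y ^ 2)) atTop (𝓝 0) := by
    refine squeeze_zero_norm (fun y => ?_) (by simpa using (hf_tendsto.pow 2).const_mul M)
    rw [norm_neg, norm_mul, Real.norm_eq_abs, Real.norm_of_nonneg (sq_nonneg _)]
    exact mul_le_mul_of_nonneg_right (hTM y) (sq_nonneg _)
  have hFTC := integral_Ioi_of_hasDerivAt_of_tendsto' hderiv (hpot.sub hsq) hlim
  rw [integral_sub hpot hsq] at hFTC
  linarith

theorem integral_sq_mul_deriv_div_eq_zero_iff (hf : ContDiff ℝ 1 f) (hw : ContDiff ℝ 1 w)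
    (hw0 : ∀ x, 0 < w x)
    (hint : IntegrableOn (fun x => w x ^ 2 * deriv (fun y => f y / w y) x ^ 2) (Ioi a)) :
    ∫ x in Ioi a, w x ^ 2 * deriv (fun y => f y / w y) x ^ 2 = 0 ↔
      ∀ x ∈ Ici a, f x = f a / w a * w x := by
  have hq : ContDiff ℝ 1 (fun y => f y / w y) := hf.div hw fun x => (hw0 x).ne'
  have hcont : Continuous fun x => w x ^ 2 * deriv (fun y => f y / w y) x ^ 2 :=
    (hw.continuous.pow 2).mul ((hq.continuous_deriv le_rfl).pow 2)
  constructor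
  · intro h0
    rw [← integral_Ici_eq_integral_Ioi] at h0
    rw [IntegrableOn, restrict_Ioi_eq_restrict_Ici] at hint
    have hzero : EqOn (fun x => w x ^ 2 * deriv (fun y => f y / w y) x ^ 2) 0 (Ici a) :=
      Measure.eqOn_of_ae_eq ((integral_eq_zero_iff_of_nonneg (fun x => by positivity) hint).1 h0)
        hcont.continuousOn continuousOn_const (by rw [interior_Ici, closure_Ioi])
    have hderiv : ∀ x ∈ Ici a, HasDerivAt (fun y => f y / w y) 0 x := by
      intro x hx
      have h := hzero hx
      simp only [Pi.zero_apply, mul_eq_zero, pow_eq_zero_iff two_ne_zero, (hw0 x).ne',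
        false_or] at h
      exact h ▸ (hq.differentiable one_ne_zero x).hasDerivAt
    intro x hx
    have hconst := constant_of_has_deriv_right_zero hq.continuous.continuousOn
      (fun y hy => (hderiv y hy.1).hasDerivWithinAt) x ⟨hx, le_rfl⟩
    rw [← hconst, div_mul_cancel₀ _ (hw0 x).ne']
  · intro hfw
    refine setIntegral_eq_zero_of_forall_eq_zero fun x hx => ?_
    have hev : (fun y => f y / w y) =ᶠ[𝓝 x] fun _ => f a / w a := by
      filter_upwards [Ioi_mem_nhds hx] with y hy
      rw [hfw y (mem_Ici.2 (le_of_lt hy)), mul_div_cancel_right₀ _ (hw0 y).ne']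
    rw [hev.deriv_eq, deriv_const]
    ring

theorem sum_integral_sq_mul_deriv_div_eq_zero_iff {ι : Type*} [Fintype ι] {ψ : ι → ℝ → ℝ}
    (hw : ContDiff ℝ 1 w) (hw0 : ∀ x, 0 < w x) (hψ : ∀ k, ContDiff ℝ 1 (ψ k))
    (hvertex : ∀ k l, ψ k a = ψ l a)
    (hint : ∀ k, IntegrableOn (fun x => w x ^ 2 * deriv (fun y => ψ k y / w y) x ^ 2) (Ioi a)) :
    ∑ k, ∫ x in Ioi a, w x ^ 2 * deriv (fun y => ψ k y / w y) x ^ 2 = 0 ↔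
      ∃ c : ℝ, ∀ k, ∀ x, a ≤ x → ψ k x = c * w x := by
  rw [Finset.sum_eq_zero_iff_of_nonneg fun k _ =>
    setIntegral_nonneg measurableSet_Ioi fun x _ => by positivity]
  simp only [Finset.mem_univ, true_implies,
    integral_sq_mul_deriv_div_eq_zero_iff (hψ _) hw hw0 (hint _), mem_Ici]
  constructor
  · intro h
    rcases isEmpty_or_nonempty ι with hι | ⟨⟨k₀⟩⟩
    · exact ⟨0, fun k => isEmptyElim k⟩
    · exact ⟨ψ k₀ a / w a, fun k x hx => by rw [h k x hx, hvertex k k₀]⟩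
  · rintro ⟨c, hc⟩ k x hx
    rw [hc k x hx, hc k a le_rfl, mul_div_cancel_right₀ _ (hw0 a).ne']

end GroundState

theorem arctanh_eq_artanh {y : ℝ} (hy : y ∈ Icc (-1) 1) : arctanh y = artanh y :=
  (artanh_eq_half_log hy).symm

/-- The slope `-(log φ_{ω,a})'` of the soliton. -/
noncomputable def solitonLogSlope (μ ω a x : ℝ) : ℝ := √ω * tanh (μ * √ω * (x - a))

section Soliton

variable {μ ω : ℝ} (a : ℝ) {f : ℝ → ℝ}

theorem continuous_solitonLogSlope : Continuous (solitonLogSlope μ ω a) :=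
  continuous_const.mul (continuous_tanh.comp (by fun_prop))

theorem solitonProfile_pos (hμ : 0 < μ) (hω : 0 < ω) (x : ℝ) : 0 < solitonProfile μ ω a x :=
  mul_pos (rpow_pos_of_pos (by positivity) _)
    (rpow_pos_of_pos (one_div_pos.2 (cosh_pos _)) _)

theorem hasDerivAt_solitonProfile (hμ : μ ≠ 0) (x : ℝ) :
    HasDerivAt (solitonProfile μ ω a)
      (-(solitonLogSlope μ ω a x * solitonProfile μ ω a x)) x := by
  have hφ : solitonProfile μ ω a =
      fun y => ((μ + 1) * ω) ^ (1 / (2 * μ)) * cosh (μ * √ω * (y - a)) ^ (-(1 / μ)) := by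
    funext y
    rw [solitonProfile, one_div (cosh _), inv_rpow (cosh_pos _).le, ← rpow_neg (cosh_pos _).le]
  have hz : HasDerivAt (fun y => μ * √ω * (y - a)) (μ * √ω) x := by
    simpa using ((hasDerivAt_id x).sub_const a).const_mul (μ * √ω)
  have hc := cosh_pos (μ * √ω * (x - a))
  rw [hφ]
  refine (((hasDerivAt_rpow_const (Or.inl hc.ne')).comp x
    ((hasDerivAt_cosh _).comp x hz)).const_mul _).congr_deriv ?_
  rw [solitonLogSlope, tanh_eq_sinh_div_cosh, show -(1 / μ) - 1 = -(1 / μ) + -1 by ring,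
    rpow_add hc, rpow_neg_one]
  field_simp

theorem solitonProfile_rpow (hμ : 0 < μ) (hω : 0 ≤ ω) (x : ℝ) :
    solitonProfile μ ω a x ^ (2 * μ) = (μ + 1) * ω * (1 - tanh (μ * √ω * (x - a)) ^ 2) := by
  set z := μ * √ω * (x - a)
  have hc := cosh_pos z
  have h₁ : 0 ≤ (μ + 1) * ω := by positivity
  have h₂ : 0 ≤ 1 / cosh z := (one_div_pos.2 hc).le
  rw [solitonProfile, mul_rpow (rpow_nonneg h₁ _) (rpow_nonneg h₂ _), ← rpow_mul h₁,
    ← rpow_mul h₂, show 1 / (2 * μ) * (2 * μ) = 1 by field_simp, rpow_one,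
    show 1 / μ * (2 * μ) = (2 : ℕ) by push_cast; field_simp, rpow_natCast,
    tanh_eq_sinh_div_cosh]
  field_simp
  linear_combination (-ω) * cosh_sq_sub_sinh_sq z

theorem hasDerivAt_solitonLogSlope (hμ : 0 < μ) (hω : 0 ≤ ω) (x : ℝ) :
    HasDerivAt (solitonLogSlope μ ω a)
      (solitonLogSlope μ ω a x ^ 2 - (ω - solitonProfile μ ω a x ^ (2 * μ))) x := by
  have hz : HasDerivAt (fun y => μ * √ω * (y - a)) (μ * √ω) x := by
    simpa using ((hasDerivAt_id x).sub_const a).const_mul (μ * √ω)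
  refine (((hasDerivAt_tanh _).comp x hz).const_mul √ω).congr_deriv ?_
  rw [solitonProfile_rpow a hμ hω, solitonLogSlope]
  linear_combination (μ * (1 - tanh (μ * √ω * (x - a)) ^ 2) - tanh (μ * √ω * (x - a)) ^ 2) *
    sq_sqrt hω

theorem abs_solitonLogSlope_le (x : ℝ) : |solitonLogSlope μ ω a x| ≤ √ω := by
  rw [solitonLogSlope, abs_mul, abs_of_nonneg (sqrt_nonneg ω)]
  exact mul_le_of_le_one_right (sqrt_nonneg ω) (abs_tanh_lt_one _).le

theorem abs_sub_solitonProfile_rpow_le (hμ : 0 < μ) (hω : 0 ≤ ω) (x : ℝ) :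
    |ω - solitonProfile μ ω a x ^ (2 * μ)| ≤ (μ + 2) * ω := by
  rw [solitonProfile_rpow a hμ hω]
  have ht := tanh_sq_lt_one (μ * √ω * (x - a))
  have ht₀ := sq_nonneg (tanh (μ * √ω * (x - a)))
  rw [abs_le]
  constructor <;> nlinarith [mul_nonneg hμ.le hω]

theorem contDiff_solitonProfile (hμ : μ ≠ 0) : ContDiff ℝ 1 (solitonProfile μ ω a) := by
  have hd := hasDerivAt_solitonProfile (ω := ω) a hμ
  refine contDiff_one_iff_deriv.2 ⟨fun x => (hd x).differentiableAt, ?_⟩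
  have hφ : Continuous (solitonProfile μ ω a) :=
    continuous_iff_continuousAt.2 fun x => (hd x).continuousAt
  rw [show deriv (solitonProfile μ ω a) = _ from funext fun x => (hd x).deriv]
  exact ((continuous_solitonLogSlope a).mul hφ).neg

theorem solitonLogSlope_zero_of_shift_arctanh (hμ : μ ≠ 0) (hω : 0 < ω) {y : ℝ}
    (hy : y ∈ Ioo (-1) 1) :
    solitonLogSlope μ ω (-(1 / (μ * √ω) * arctanh y)) 0 = √ω * y := by
  rw [solitonLogSlope, show μ * √ω * (0 - -(1 / (μ * √ω) * arctanh y)) = arctanh y by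
    field_simp; ring, arctanh_eq_artanh (Ioo_subset_Icc_self hy), tanh_artanh hy]

theorem solitonLogSlope_zero_of_shift_arctanh_abs_div {α n : ℝ} (hμ : μ ≠ 0) (hn : 0 < n)
    (hω : α ^ 2 / n ^ 2 < ω) :
    solitonLogSlope μ ω (-(1 / (μ * √ω) * arctanh (|α| / (n * √ω)))) 0 = |α| / n := by
  have hω₀ : 0 < ω := lt_of_le_of_lt (by positivity) hω
  have hns : 0 < n * √ω := by positivity
  have hy : |α| / (n * √ω) ∈ Ioo (-1) 1 := by
    refine ⟨by linarith [div_nonneg (abs_nonneg α) hns.le], (div_lt_one hns).2 ?_⟩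
    refine abs_lt_of_sq_lt_sq ?_ hns.le
    rwa [mul_pow, sq_sqrt hω₀.le, mul_comm, ← div_lt_iff₀ (by positivity)]
  rw [solitonLogSlope_zero_of_shift_arctanh hμ hω₀ hy]
  field_simp

theorem solitonProfile_sq_mul_deriv_div_sq (hμ : 0 < μ) (hω : 0 < ω) (hf : Differentiable ℝ f)
    (x : ℝ) :
    solitonProfile μ ω a x ^ 2 * deriv (fun y => f y / solitonProfile μ ω a y) x ^ 2
      = (deriv f x + solitonLogSlope μ ω a x * f x) ^ 2 := by
  have hφ := (solitonProfile_pos a hμ hω x).ne'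
  rw [((hf x).hasDerivAt.div_of_hasDerivAt_neg_mul
    (hasDerivAt_solitonProfile a hμ.ne' x) hφ).deriv]
  field_simp

theorem integrableOn_solitonProfile_sq_mul_deriv_div_sq (hμ : 0 < μ) (hω : 0 < ω)
    (hf : ContDiff ℝ 1 f) {b : ℝ} (hf2 : IntegrableOn (fun x => f x ^ 2) (Ioi b))
    (hf'2 : IntegrableOn (fun x => deriv f x ^ 2) (Ioi b)) :
    IntegrableOn
      (fun x => solitonProfile μ ω a x ^ 2 * deriv (fun y => f y / solitonProfile μ ω a y) x ^ 2)
      (Ioi b) := by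
  simp_rw [solitonProfile_sq_mul_deriv_div_sq a hμ hω (hf.differentiable one_ne_zero)]
  exact integrableOn_sq_deriv_add_mul hf (continuous_solitonLogSlope a)
    (abs_solitonLogSlope_le a) hf2 hf'2

theorem integral_Ioi_Lplus_eq (hμ : 0 < μ) (hω : 0 < ω) (hf : ContDiff ℝ 1 f) {b : ℝ}
    (hf2 : IntegrableOn (fun x => f x ^ 2) (Ioi b))
    (hf'2 : IntegrableOn (fun x => deriv f x ^ 2) (Ioi b))
    (hf_tendsto : Tendsto f atTop (𝓝 0)) :
    ∫ x in Ioi b, (deriv f x ^ 2 + ω * f x ^ 2 - solitonProfile μ ω a x ^ (2 * μ) * f x ^ 2)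
      = (∫ x in Ioi b,
          solitonProfile μ ω a x ^ 2 * deriv (fun y => f y / solitonProfile μ ω a y) x ^ 2)
        + solitonLogSlope μ ω a b * f b ^ 2 := by
  have hV : Continuous fun x => ω - solitonProfile μ ω a x ^ (2 * μ) :=
    continuous_const.sub ((contDiff_solitonProfile a hμ.ne').continuous.rpow_const
      fun _ => Or.inr (by positivity))
  calc ∫ x in Ioi b, (deriv f x ^ 2 + ω * f x ^ 2 - solitonProfile μ ω a x ^ (2 * μ) * f x ^ 2)
      = ∫ x in Ioi b, (deriv f x ^ 2 + (ω - solitonProfile μ ω a x ^ (2 * μ)) * f x ^ 2) := by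
        congr 1 with x; ring
    _ = (∫ x in Ioi b, (deriv f x + solitonLogSlope μ ω a x * f x) ^ 2)
          + solitonLogSlope μ ω a b * f b ^ 2 :=
        integral_Ioi_sq_deriv_add_potential hf (hasDerivAt_solitonLogSlope a hμ hω.le)
          (abs_solitonLogSlope_le a) hV (abs_sub_solitonProfile_rpow_le a hμ hω.le) hf2 hf'2
          hf_tendsto
    _ = _ := by simp_rw [solitonProfile_sq_mul_deriv_div_sq a hμ hω (hf.differentiable one_ne_zero)]

/-- `hslope` is the δ-condition `N φ'(0) = α φ(0)` at the vertex, since `φ' = -T φ`. -/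
theorem LplusForm_solitonProfile_eq (hμ : 0 < μ) (hω : 0 < ω) {α : ℝ} {N : ℕ}
    (hslope : (N : ℝ) * solitonLogSlope μ ω a 0 = -α) {ψ : Fin N → ℝ → ℝ} (k₀ : Fin N)
    (hψ : ∀ k, ContDiff ℝ 1 (ψ k)) (hvertex : ∀ k, ψ k 0 = ψ k₀ 0)
    (hL2 : ∀ k, IntegrableOn (fun x => ψ k x ^ 2) (Ioi 0))
    (hL2' : ∀ k, IntegrableOn (fun x => deriv (ψ k) x ^ 2) (Ioi 0))
    (hdecay : ∀ k, Tendsto (ψ k) atTop (𝓝 0)) :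
    LplusForm μ ω α (solitonProfile μ ω a) ψ k₀ = ∑ k, ∫ x in Ioi 0,
      solitonProfile μ ω a x ^ 2 * deriv (fun y => ψ k y / solitonProfile μ ω a y) x ^ 2 := by
  rw [LplusForm, Finset.sum_congr rfl fun k _ =>
      integral_Ioi_Lplus_eq a hμ hω (hψ k) (hL2 k) (hL2' k) (hdecay k),
    Finset.sum_add_distrib]
  simp only [hvertex, Finset.sum_const, Finset.card_univ, Fintype.card_fin, nsmul_eq_mul]
  linear_combination ψ k₀ 0 ^ 2 * hslope

end Soliton

theorem stmt_13 (μ α : ℝ) (hμ : 0 < μ) (hα : α < 0) (N : ℕ) (hN : 0 < N)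
    (ω : ℝ) (hω : ω > α ^ 2 / (N : ℝ) ^ 2)
    (a₀ : ℝ) (ha₀ : a₀ = 1 / (μ * Real.sqrt ω) * arctanh (|α| / (N * Real.sqrt ω)))
    (w : ℝ → ℝ) (hw : w = solitonProfile μ ω (-a₀))
    (ψ : Fin N → ℝ → ℝ)
    (hC1 : ∀ k, ContDiff ℝ 1 (ψ k))
    (hvertex : ∀ k l : Fin N, ψ k 0 = ψ l 0)
    (hL2 : ∀ k, IntegrableOn (fun x => (ψ k x) ^ 2) (Ioi 0))
    (hL2' : ∀ k, IntegrableOn (fun x => (deriv (ψ k) x) ^ 2) (Ioi 0))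
    (hdecay : ∀ k, Tendsto (ψ k) atTop (nhds 0)) :
    -- the quadratic form of `L₊` is a weighted Dirichlet form
    LplusForm μ ω α w ψ ⟨0, hN⟩
      = ∑ k : Fin N, ∫ x in Ioi (0 : ℝ),
          w x ^ 2 * (deriv (fun y => ψ k y / w y) x) ^ 2 ∧
    -- in particular it is nonnegative
    0 ≤ LplusForm μ ω α w ψ ⟨0, hN⟩ ∧
    -- and it vanishes iff every `ψ_k` is the same constant multiple of `w`
    (LplusForm μ ω α w ψ ⟨0, hN⟩ = 0 ↔
      ∃ c : ℝ, ∀ k : Fin N, ∀ x : ℝ, 0 ≤ x → ψ k x = c * w x) := by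
  subst hw
  have hω₀ : 0 < ω := lt_of_le_of_lt (by positivity) hω
  have hslope : (N : ℝ) * solitonLogSlope μ ω (-a₀) 0 = -α := by
    rw [ha₀, solitonLogSlope_zero_of_shift_arctanh_abs_div hμ.ne' (Nat.cast_pos.2 hN) hω,
      abs_of_neg hα]
    field_simp
  have hform := LplusForm_solitonProfile_eq _ hμ hω₀ hslope ⟨0, hN⟩ hC1
    (fun k => hvertex k _) hL2 hL2' hdecay
  refine ⟨hform, ?_, ?_⟩
  · exact hform ▸ Finset.sum_nonneg fun k _ =>
      setIntegral_nonneg measurableSet_Ioi fun x _ => by positivity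
  · rw [hform]
    exact sum_integral_sq_mul_deriv_div_eq_zero_iff (contDiff_solitonProfile _ hμ.ne')
      (solitonProfile_pos _ hμ hω₀) hC1 hvertex fun k =>
        integrableOn_solitonProfile_sq_mul_deriv_div_sq _ hμ hω₀ (hC1 k) (hL2 k) (hL2' k)
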